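/- Let D be a coassociative counital coalgebra over a field k whose maximal cosemisimple subcoalgebra D^ss is finite-dimensional. Then any Noetherian left D-contramodule is co-Artinian. -/

import Mathlib

open TensorProduct LinearMap

section Contra

variable (k : Type) [Field k]
variable (D : Type) [AddCommGroup D] [Module k D] [Coalgebra k D]

/-- Axioms for a left `D`-contramodule structure given by a contraaction map `π`. -/
structure IsContra {P : Type} [AddCommGroup P] [Module k P]
    (π : (D →ₗ[k] P) →ₗ[k] P) : Prop where
  contraassoc : ∀ f : D ⊗[k] D →ₗ[k] P,
    π (f ∘ₗ CoalgebraStruct.comul (R := k) (A := D)) = π (π ∘ₗ TensorProduct.curry f)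
  contraunit : ∀ p : P,
    π ((CoalgebraStruct.counit (R := k) (A := D)).smulRight p) = p

/-- A `k`-linear map between contramodules is a contramodule morphism. -/
def IsContraHom {P Q : Type} [AddCommGroup P] [Module k P] [AddCommGroup Q] [Module k Q]
    (πP : (D →ₗ[k] P) →ₗ[k] P) (πQ : (D →ₗ[k] Q) →ₗ[k] Q) (f : P →ₗ[k] Q) : Prop :=
  ∀ g : D →ₗ[k] P, f (πP g) = πQ (f ∘ₗ g)

/-- The contraaction of the free left contramodule `Hom_k(D, V)`. -/
noncomputable def freeContraaction (V : Type) [AddCommGroup V] [Module k V] :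
    (D →ₗ[k] (D →ₗ[k] V)) →ₗ[k] (D →ₗ[k] V) :=
  (LinearMap.lcomp k V (CoalgebraStruct.comul (R := k) (A := D))) ∘ₗ
    TensorProduct.uncurry (RingHom.id k) D D V

/-- A contramodule is finitely generated if it is a quotient of a free contramodule
with a finite-dimensional space of generators. -/
def FinGenContra {P : Type} [AddCommGroup P] [Module k P]
    (π : (D →ₗ[k] P) →ₗ[k] P) : Prop :=
  ∃ (V : Type) (_ : AddCommGroup V) (_ : Module k V), FiniteDimensional k V ∧
    ∃ g : (D →ₗ[k] V) →ₗ[k] P, Function.Surjective g ∧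
      IsContraHom k D (freeContraaction k D V) π g

end Contra

open TensorProduct LinearMap

section Conil

variable (k : Type) [Field k]
variable (C : Type) [AddCommGroup C] [Module k C] [Coalgebra k C]

/-- The image of `A ⊗ B` in `C ⊗ C`, for submodules `A B ⊆ C`. -/
noncomputable def tensorSub (A B : Submodule k C) : Submodule k (C ⊗[k] C) :=
  LinearMap.range (TensorProduct.map A.subtype B.subtype)

/-- `conilChain k C E n` is the kernel of the `n`-fold iterated comultiplication map
`C → (C/E)^{⊗ (n+1)}`. -/
noncomputable def conilChain (E : Submodule k C) : ℕ → Submodule k C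
  | 0 => E
  | n + 1 => Submodule.comap (CoalgebraStruct.comul (R := k) (A := C))
      (tensorSub k C E ⊤ ⊔ tensorSub k C ⊤ (conilChain E n))

/-- The quotient of `C` by the subcoalgebra `E` is a conilpotent coalgebra without
counit: every element is annihilated by some iterated comultiplication map
`C → (C/E)^{⊗ (n+1)}`. -/
def ConilpotentQuotient (E : Submodule k C) : Prop :=
  ∀ c : C, ∃ n : ℕ, c ∈ conilChain k C E n

variable {E : Type} [AddCommGroup E] [Module k E] [Coalgebra k E]

/-- Given a subcoalgebra `ι : E → C` and a comodule coaction `ρ` on `M`, this is the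
maximal subcomodule `_E M` of `M` whose comodule structure comes from an `E`-comodule
structure; it is the full preimage of `E ⊗ M` under the coaction map. -/
noncomputable def maxSubcomodule {M : Type} [AddCommGroup M] [Module k M]
    (ι : E →ₗc[k] C) (ρ : M →ₗ[k] C ⊗[k] M) : Submodule k M :=
  Submodule.comap ρ (LinearMap.range (ι.toLinearMap.rTensor M))

end Conil

section MaxCosemisimple

variable (k : Type) [Field k]
variable (C : Type) [AddCommGroup C] [Module k C] [Coalgebra k C]

/-- A subspace `E ⊆ C` is a subcoalgebra if the comultiplication takes it into
the image of `E ⊗ E` in `C ⊗ C`. -/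
def IsSubcoalgebra (E : Submodule k C) : Prop :=
  ∀ x ∈ E, CoalgebraStruct.comul (R := k) (A := C) x ∈ tensorSub k C E E

/-- `E` is the maximal cosemisimple subcoalgebra `C^ss` of `C`: it is the minimal
subcoalgebra of `C` such that the quotient coalgebra without counit `C/E` is
conilpotent. -/
def IsMaxCosemisimple (E : Submodule k C) : Prop :=
  IsSubcoalgebra k C E ∧ ConilpotentQuotient k C E ∧
    ∀ E' : Submodule k C, IsSubcoalgebra k C E' → ConilpotentQuotient k C E' → E ≤ E'

end MaxCosemisimple

section ContraSub

variable (k : Type) [Field k]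
variable (D : Type) [AddCommGroup D] [Module k D] [Coalgebra k D]
variable {P : Type} [AddCommGroup P] [Module k P]

/-- A subspace `Q ⊆ P` is a subcontramodule if the contraaction takes every map
`D → P` with values in `Q` into `Q`. -/
def IsSubcontra (π : (D →ₗ[k] P) →ₗ[k] P) (Q : Submodule k P) : Prop :=
  ∀ g : D →ₗ[k] P, LinearMap.range g ≤ Q → π g ∈ Q

/-- A contraaction `π'` on a subspace `Q ⊆ P` is compatible with the contraaction `π`
on `P` if the inclusion `Q → P` is a morphism of contramodules.  For a subcontramodule
`Q` such a compatible contraaction exists and is unique; it is the canonical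
contramodule structure of the subcontramodule. -/
def CompatibleSubContraaction (π : (D →ₗ[k] P) →ₗ[k] P) (Q : Submodule k P)
    (π' : (D →ₗ[k] ↥Q) →ₗ[k] ↥Q) : Prop :=
  ∀ g : D →ₗ[k] ↥Q, (π' g : P) = π (Q.subtype ∘ₗ g)

/-- A contramodule is Noetherian if all its subcontramodules are finitely
generated (as contramodules, with their canonical induced structure). -/
def NoetherianContra (π : (D →ₗ[k] P) →ₗ[k] P) : Prop :=
  ∀ Q : Submodule k P, IsSubcontra k D π Q →
    ∃ π' : (D →ₗ[k] ↥Q) →ₗ[k] ↥Q,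
      CompatibleSubContraaction k D π Q π' ∧ FinGenContra k D π'

/-- A contramodule is co-Artinian if every ascending chain of its subcontramodules
terminates. -/
def CoArtinianContra (π : (D →ₗ[k] P) →ₗ[k] P) : Prop :=
  ∀ f : ℕ → Submodule k P, (∀ n, IsSubcontra k D π (f n)) →
    (∀ n, f n ≤ f (n + 1)) → ∃ n, ∀ m, n ≤ m → f m = f n

end ContraSub

/-
Let `U` be the union of an ascending chain `f` of subcontramodules and `Q = π(Hom_k(D, U))` the
subcontramodule it generates. Since `Q` is finitely generated, `Q = π(Hom_k(D, V₀))` for a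
finite-dimensional `V₀ ⊆ Q`. Splitting maps `D → U` along a projection onto the finite-dimensional
`D^ss`, and using that `U` is stable under the action of `D^*`, gives `Q ⊆ U + π(Hom_k(D/D^ss, Q))`;
hence `V₀`, and with it `Q`, lies in `f N + π(Hom_k(D/D^ss, Q))` for some `N`.

The contramodule Nakayama lemma for the conilpotent `D/D^ss` then gives `Q = f N`: if
`P = Q₀ + π(Hom_k(D/D^ss, P))`, then inductively `P = Q₀ + π(Hom_k(D/C_n, P))` along the
conilpotency filtration `C_n`, and iterating these decompositions produces a series of maps which
is locally finite on `D = ⋃ C_n`; contraassociativity makes its sum telescope, so every element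
of `P` lies in `Q₀`.
-/

section LinearAlgebra

variable {k M N : Type*} [DivisionRing k] [AddCommGroup M] [Module k M] [AddCommGroup N]
  [Module k N]

theorem exists_linear_decomposition_of_mem_sup_map (f : M →ₗ[k] N) (A : Submodule k N)
    (K : Submodule k M) :
    ∃ (τ : N →ₗ[k] N) (σ : N →ₗ[k] M), (∀ y, τ y ∈ A) ∧ (∀ y, σ y ∈ K) ∧
      ∀ y ∈ A ⊔ K.map f, τ y + f (σ y) = y := by
  set ψ := A.subtype.coprod (f ∘ₗ K.subtype)
  have hψ : range ψ = A ⊔ K.map f := by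
    rw [range_coprod, Submodule.range_subtype, range_comp, Submodule.range_subtype]
  obtain ⟨s, hs⟩ := ψ.rangeRestrict.exists_rightInverse_of_surjective ψ.range_rangeRestrict
  obtain ⟨r, hr⟩ := (range ψ).subtype.exists_leftInverse_of_injective (range ψ).ker_subtype
  refine ⟨A.subtype ∘ₗ fst k A K ∘ₗ s ∘ₗ r, K.subtype ∘ₗ snd k A K ∘ₗ s ∘ₗ r,
    fun y => (s (r y)).1.2, fun y => (s (r y)).2.2, fun y hy => ?_⟩
  rw [← hψ] at hy
  have hry : r y = ⟨y, hy⟩ := LinearMap.congr_fun hr ⟨y, hy⟩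
  have := congr_arg Subtype.val (LinearMap.congr_fun hs (r y))
  simp only [LinearMap.comp_apply, hry] at this ⊢
  simpa [ψ] using this

end LinearAlgebra

theorem Submodule.comap_subtype_iSup_of_le {R M ι : Type*} [Semiring R] [AddCommMonoid M]
    [Module R M] {Q : Submodule R M} {S : ι → Submodule R M} (hS : ∀ i, S i ≤ Q) :
    (⨆ i, S i).comap Q.subtype = ⨆ i, (S i).comap Q.subtype := by
  conv_lhs => rw [← iSup_congr fun i => (Submodule.map_comap_subtype Q (S i)).trans
    (inf_eq_right.mpr (hS i))]
  exact Submodule.comap_iSup_map_of_injective Q.injective_subtype _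

section LocallyFiniteSum

variable {R ι A B C : Type*} [CommSemiring R] [AddCommMonoid A] [Module R A] [AddCommMonoid B]
  [Module R B] [AddCommMonoid C] [Module R C]

theorem hasFiniteSupport_linearMap_apply {f : ι → A} (hf : f.HasFiniteSupport)
    (φ : ι → A →ₗ[R] B) : (fun i => φ i (f i)).HasFiniteSupport :=
  hf.subset fun i hi h0 => hi (by simp [h0])

theorem finsum_nat_eq_add_finsum_succ {M : Type*} [AddCommMonoid M] {f : ℕ → M}
    (hf : f.HasFiniteSupport) : ∑ᶠ n, f n = f 0 + ∑ᶠ n, f (n + 1) := by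
  obtain ⟨N, hN⟩ := hf.bddAbove
  have h1 : f.support ⊆ ↑(Finset.range (N + 1)) := fun n hn => by
    simpa [Nat.lt_succ_iff] using hN hn
  have h2 : (fun n => f (n + 1)).support ⊆ ↑(Finset.range N) := fun n hn => by
    simpa using hN hn
  rw [finsum_eq_sum_of_support_subset f h1, finsum_eq_sum_of_support_subset _ h2,
    Finset.sum_range_succ', add_comm]

noncomputable def locallyFiniteSum (h : ι → A →ₗ[R] B)
    (hh : ∀ a, (fun i => h i a).HasFiniteSupport) : A →ₗ[R] B where
  toFun a := ∑ᶠ i, h i a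
  map_add' a b := by
    simp only [map_add]
    exact finsum_add_distrib (hh a) (hh b)
  map_smul' c a := by
    simp only [map_smul, RingHom.id_apply]
    exact (smul_finsum' c (hh a)).symm

theorem locallyFiniteSum_apply (h : ι → A →ₗ[R] B) (hh : ∀ a, (fun i => h i a).HasFiniteSupport)
    (a : A) : locallyFiniteSum h hh a = ∑ᶠ i, h i a :=
  rfl

theorem hasFiniteSupport_lift (G : ι → A →ₗ[R] B →ₗ[R] C)
    (hG : ∀ a, (fun i => G i a).HasFiniteSupport) (t : A ⊗[R] B) :
    (fun i => lift (G i) t).HasFiniteSupport := by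
  induction t using TensorProduct.induction_on with
  | zero => simp [Function.HasFiniteSupport]
  | tmul a b => simpa using hasFiniteSupport_linearMap_apply (hG a) fun _ => applyₗ b
  | add x y hx hy => simpa only [map_add] using hx.fun_add hy

theorem lift_locallyFiniteSum (G : ι → A →ₗ[R] B →ₗ[R] C)
    (hG : ∀ a, (fun i => G i a).HasFiniteSupport) :
    lift (locallyFiniteSum G hG) =
      locallyFiniteSum (fun i => lift (G i)) (hasFiniteSupport_lift G hG) :=
  TensorProduct.ext' fun a b => by
    simpa [locallyFiniteSum_apply] using map_finsum (applyₗ (R := R) b) (hG a)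

end LocallyFiniteSum

section Wedge

variable {k C : Type} [Field k] [AddCommGroup C] [Module k C] [Coalgebra k C]

/-- The wedge `X ∧ Y = Δ⁻¹(X ⊗ C + C ⊗ Y)`. -/
noncomputable def wedge (X Y : Submodule k C) : Submodule k C :=
  (tensorSub k C X ⊤ ⊔ tensorSub k C ⊤ Y).comap (CoalgebraStruct.comul (R := k) (A := C))

theorem wedge_mono_right (X : Submodule k C) {Y Y' : Submodule k C} (h : Y ≤ Y') :
    wedge X Y ≤ wedge X Y' :=
  Submodule.comap_mono (sup_le_sup_left (range_mapIncl_mono le_rfl h) _)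

theorem IsSubcoalgebra.le_wedge {E : Submodule k C} (hE : IsSubcoalgebra k C E)
    (X : Submodule k C) {Y : Submodule k C} (hY : E ≤ Y) : E ≤ wedge X Y :=
  fun _ he => Submodule.mem_sup_right (range_mapIncl_mono le_top hY (hE _ he))

theorem IsSubcoalgebra.le_conilChain {E : Submodule k C} (hE : IsSubcoalgebra k C E) :
    ∀ n, E ≤ conilChain k C E n
  | 0 => le_rfl
  | n + 1 => hE.le_wedge E (hE.le_conilChain n)

theorem IsSubcoalgebra.monotone_conilChain {E : Submodule k C} (hE : IsSubcoalgebra k C E) :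
    Monotone (conilChain k C E) := by
  refine monotone_nat_of_le_succ fun n => ?_
  induction n with
  | zero => exact hE.le_wedge E le_rfl
  | succ n ih => exact wedge_mono_right E ih

end Wedge

section Contramodule

variable {k D P : Type} [Field k] [AddCommGroup D] [Module k D] [AddCommGroup P] [Module k P]
  {π : (D →ₗ[k] P) →ₗ[k] P}

local notation "Δ" => CoalgebraStruct.comul (R := k) (A := D)

variable (π) in
/-- `π(Hom_k(D, X))`. -/
noncomputable def contraSpan (X : Submodule k P) : Submodule k P :=
  (Submodule.compatibleMaps ⊤ X).map π

variable (π) in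
/-- `π(Hom_k(D/Y, P))`. -/
noncomputable def contraKill (Y : Submodule k D) : Submodule k P :=
  (Submodule.compatibleMaps Y ⊥).map π

theorem mem_contraSpan {X : Submodule k P} {x : P} :
    x ∈ contraSpan π X ↔ ∃ g : D →ₗ[k] P, range g ≤ X ∧ π g = x := by
  simp only [contraSpan, Submodule.mem_map, range_le_iff_comap, ← top_le_iff]
  rfl

theorem mem_contraKill {Y : Submodule k D} {x : P} :
    x ∈ contraKill π Y ↔ ∃ g : D →ₗ[k] P, Y ≤ ker g ∧ π g = x :=
  Iff.rfl

theorem contraKill_anti {X Y : Submodule k D} (h : X ≤ Y) : contraKill π Y ≤ contraKill π X :=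
  Submodule.map_mono fun _ hg => h.trans hg

theorem range_lift_le {X : Submodule k P} (G : D →ₗ[k] D →ₗ[k] P) (hG : ∀ a b, G a b ∈ X) :
    range (lift G) ≤ X := by
  rw [range_le_iff_comap, eq_top_iff, ← TensorProduct.span_tmul_eq_top, Submodule.span_le]
  rintro _ ⟨a, b, rfl⟩
  simpa using hG a b

theorem contraSpan_le_sup_contraKill {E : Submodule k D} [FiniteDimensional k E]
    {U : Submodule k P} (hU : ∀ (φ : D →ₗ[k] k) (x : P), x ∈ U → π (φ.smulRight x) ∈ U) :
    contraSpan π U ≤ U ⊔ contraKill π E := by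
  intro x hx
  obtain ⟨h, hh, rfl⟩ := mem_contraSpan.mp hx
  obtain ⟨r, hr⟩ := E.subtype.exists_leftInverse_of_injective E.ker_subtype
  set p := E.subtype ∘ₗ r
  have hp : E ≤ ker (h - h ∘ₗ p) := fun e he => by
    have hre : (r e : D) = e := congr_arg Subtype.val (LinearMap.congr_fun hr ⟨e, he⟩)
    simp [p, hre]
  set b := Module.finBasis k E
  have hfin : h ∘ₗ p = ∑ i, (b.coord i ∘ₗ r).smulRight (h (b i)) := by
    ext d
    rw [LinearMap.sum_apply, LinearMap.comp_apply, LinearMap.comp_apply, ← b.sum_repr (r d),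
      map_sum, map_sum]
    simp
  rw [show h = h ∘ₗ p + (h - h ∘ₗ p) by abel, map_add]
  refine Submodule.add_mem_sup ?_ ⟨_, hp, rfl⟩
  rw [hfin, map_sum]
  exact U.sum_mem fun i _ => hU _ _ (hh ⟨_, rfl⟩)

variable [Coalgebra k D]

theorem IsContra.map_lift_comp_comul (hP : IsContra k D π) (G : D →ₗ[k] D →ₗ[k] P) :
    π (lift G ∘ₗ Δ) = π (π ∘ₗ G) := by
  have h := hP.contraassoc (lift G)
  rwa [show curry (lift G) = G from ext₂ fun a b => by simp] at h

theorem wedge_le_ker_lift_comp_comul {X Y : Submodule k D} (G : D →ₗ[k] D →ₗ[k] P)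
    (hX : X ≤ ker G) (hY : ∀ a, Y ≤ ker (G a)) : wedge X Y ≤ ker (lift G ∘ₗ Δ) := by
  intro c hc
  obtain ⟨_, ⟨s, rfl⟩, _, ⟨t, rfl⟩, hst⟩ := Submodule.mem_sup.mp hc
  have hs : lift G ∘ₗ map X.subtype (⊤ : Submodule k D).subtype = 0 :=
    TensorProduct.ext' fun a b => by simp [show G a = 0 from hX a.2]
  have ht : lift G ∘ₗ map (⊤ : Submodule k D).subtype Y.subtype = 0 :=
    TensorProduct.ext' fun a b => by simpa using hY a b.2
  rw [mem_ker, LinearMap.comp_apply, ← hst, map_add, ← LinearMap.comp_apply (lift G),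
    ← LinearMap.comp_apply (lift G), hs, ht, LinearMap.zero_apply, LinearMap.zero_apply, add_zero]

theorem IsContra.le_contraSpan (hP : IsContra k D π) (X : Submodule k P) : X ≤ contraSpan π X :=
  fun x hx => mem_contraSpan.mpr ⟨_, by
    rintro _ ⟨d, rfl⟩
    exact X.smul_mem _ hx, hP.contraunit x⟩

theorem IsContra.isSubcontra_contraSpan (hP : IsContra k D π) (X : Submodule k P) :
    IsSubcontra k D π (contraSpan π X) := by
  intro g hg
  obtain ⟨τ, σ, hτ, hσ, hτσ⟩ :=
    exists_linear_decomposition_of_mem_sup_map π ⊥ (Submodule.compatibleMaps ⊤ X)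
  have hg' : π ∘ₗ σ ∘ₗ g = g := by
    ext d
    have h := hτσ (g d) (by simpa [contraSpan] using hg ⟨d, rfl⟩)
    rwa [(Submodule.mem_bot k).mp (hτ _), zero_add] at h
  rw [← hg', ← hP.map_lift_comp_comul]
  refine mem_contraSpan.mpr ⟨_, (range_comp_le_range _ _).trans (range_lift_le _ fun a b => ?_),
    rfl⟩
  exact hσ (g a) Submodule.mem_top

theorem IsContra.apply_mem_sup_contraKill_wedge (hP : IsContra k D π) {A : Submodule k P}
    (hA : IsSubcontra k D π A) {W Y : Submodule k D} {g : D →ₗ[k] P} (hgW : W ≤ ker g)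
    (hg : range g ≤ A ⊔ contraKill π Y) : π g ∈ A ⊔ contraKill π (wedge W Y) := by
  obtain ⟨τ, σ, hτ, hσ, hτσ⟩ :=
    exists_linear_decomposition_of_mem_sup_map π A (Submodule.compatibleMaps Y ⊥)
  have hsplit : g = τ ∘ₗ g + π ∘ₗ σ ∘ₗ g := by
    ext d
    exact (hτσ (g d) (hg ⟨d, rfl⟩)).symm
  rw [hsplit, map_add, ← hP.map_lift_comp_comul]
  refine Submodule.add_mem_sup (hA _ ?_)
    ⟨_, wedge_le_ker_lift_comp_comul (σ ∘ₗ g) ?_ fun a => hσ (g a), rfl⟩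
  · rintro _ ⟨d, rfl⟩
    exact hτ (g d)
  · exact hgW.trans (ker_le_ker_comp g σ)

end Contramodule

section Nakayama

variable {k D P : Type} [Field k] [AddCommGroup D] [Module k D] [Coalgebra k D]
  [AddCommGroup P] [Module k P] {π : (D →ₗ[k] P) →ₗ[k] P}

local notation "Δ" => CoalgebraStruct.comul (R := k) (A := D)

theorem IsContra.map_comp_locallyFiniteSum (hP : IsContra k D π) (h : ℕ → D →ₗ[k] P)
    (G : ℕ → D →ₗ[k] D →ₗ[k] P) (hh : ∀ c, (fun n => h n c).HasFiniteSupport)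
    (hG : ∀ c, (fun n => G n c).HasFiniteSupport) (hstep : ∀ n, h (n + 1) = lift (G n) ∘ₗ Δ) :
    π (π ∘ₗ locallyFiniteSum G hG) = π (locallyFiniteSum h hh) - π (h 0) := by
  rw [← hP.map_lift_comp_comul, eq_sub_iff_add_eq, ← map_add]
  congr 1
  ext c
  rw [LinearMap.add_apply, LinearMap.comp_apply, lift_locallyFiniteSum, locallyFiniteSum_apply,
    locallyFiniteSum_apply, finsum_nat_eq_add_finsum_succ (hh c), add_comm]
  simp only [hstep, LinearMap.comp_apply]

theorem IsContra.sup_contraKill_conilChain_eq_top (hP : IsContra k D π) {E : Submodule k D}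
    {Q₀ : Submodule k P} (hQ₀ : IsSubcontra k D π Q₀) (h : Q₀ ⊔ contraKill π E = ⊤) (n : ℕ) :
    Q₀ ⊔ contraKill π (conilChain k D E n) = ⊤ := by
  induction n with
  | zero => exact h
  | succ n ih =>
    refine eq_top_iff.mpr (h.ge.trans (sup_le le_sup_left fun x hx => ?_))
    obtain ⟨g, hg, rfl⟩ := mem_contraKill.mp hx
    exact hP.apply_mem_sup_contraKill_wedge hQ₀ hg (ih ▸ le_top)

theorem IsContra.eq_top_of_sup_contraKill_eq_top (hP : IsContra k D π) {E : Submodule k D}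
    (hE : IsSubcoalgebra k D E) (hconil : ConilpotentQuotient k D E) {Q₀ : Submodule k P}
    (hQ₀ : IsSubcontra k D π Q₀) (h : Q₀ ⊔ contraKill π E = ⊤) : Q₀ = ⊤ := by
  set ch := conilChain k D E
  have hdec : ∀ n, ∃ (τ : P →ₗ[k] P) (σ : P →ₗ[k] D →ₗ[k] P), (∀ y, τ y ∈ Q₀) ∧
      (∀ y, ch n ≤ ker (σ y)) ∧ ∀ y, τ y + π (σ y) = y := fun n => by
    obtain ⟨τ, σ, hτ, hσ, hτσ⟩ :=
      exists_linear_decomposition_of_mem_sup_map π Q₀ (Submodule.compatibleMaps (ch n) ⊥)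
    exact ⟨τ, σ, hτ, hσ, fun y =>
      hτσ y ((hP.sup_contraKill_conilChain_eq_top hQ₀ h n).ge Submodule.mem_top)⟩
  choose τ σ hτ hσ hτσ using hdec
  refine eq_top_iff.mpr fun x _ => ?_
  -- `π (g n) ≡ π (g (n + 1))` modulo `Q₀`, and `g n` vanishes on `ch n`.
  let g : ℕ → D →ₗ[k] P := fun n => Nat.rec (σ 0 x) (fun m gm => lift (σ m ∘ₗ gm) ∘ₗ Δ) n
  have hg : ∀ n, ch n ≤ ker (g n) := by
    intro n
    induction n with
    | zero => exact hσ 0 x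
    | succ n ih =>
      refine wedge_le_ker_lift_comp_comul (σ n ∘ₗ g n) ?_ fun a => hσ n _
      exact ((hE.le_conilChain n).trans ih).trans (ker_le_ker_comp _ _)
  have hgfin : ∀ c, (fun n => g n c).HasFiniteSupport := fun c => by
    obtain ⟨m, hm⟩ := hconil c
    refine (Set.finite_Iio m).subset fun n hn => ?_
    by_contra hnm
    exact hn (hg n (hE.monotone_conilChain (not_lt.mp hnm) hm))
  have hσfin : ∀ c, (fun n => σ n (g n c)).HasFiniteSupport := fun c =>
    hasFiniteSupport_linearMap_apply (hgfin c) σ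
  have htel := hP.map_comp_locallyFiniteSum g (fun n => σ n ∘ₗ g n) hgfin hσfin fun n => rfl
  set u := locallyFiniteSum g hgfin - π ∘ₗ locallyFiniteSum (fun n => σ n ∘ₗ g n) hσfin
  have hu : range u ≤ Q₀ := by
    rintro _ ⟨c, rfl⟩
    have : u c = ∑ᶠ n, τ n (g n c) := by
      simp only [u, LinearMap.sub_apply, LinearMap.comp_apply, locallyFiniteSum_apply]
      rw [map_finsum π (hσfin c), ← finsum_sub_distrib (hgfin c) ((hσfin c).fun_comp (map_zero π))]
      exact finsum_congr fun n => (eq_sub_of_add_eq (hτσ n _)).symm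
    rw [this]
    exact finsum_induction _ Q₀.zero_mem (fun _ _ => Q₀.add_mem) fun n => hτ n _
  have hx : x = τ 0 x + π u := by
    rw [map_sub, htel, sub_sub_cancel]
    exact (hτσ 0 x).symm
  rw [hx]
  exact Q₀.add_mem (hτ 0 x) (hQ₀ u hu)

end Nakayama

section FiniteGeneration

variable {k D P : Type} [Field k] [AddCommGroup D] [Module k D] [Coalgebra k D]
  [AddCommGroup P] [Module k P] {π : (D →ₗ[k] P) →ₗ[k] P}

local notation "ε" => CoalgebraStruct.counit (R := k) (A := D)

theorem freeContraaction_smulRight_comp {V : Type} [AddCommGroup V] [Module k V]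
    (g : D →ₗ[k] V) : freeContraaction k D V (smulRightₗ ε ∘ₗ g) = g := by
  have h : lift (smulRightₗ ε ∘ₗ g) =
      g ∘ₗ (TensorProduct.rid k D).toLinearMap ∘ₗ LinearMap.lTensor D ε :=
    TensorProduct.ext' fun a b => by simp
  ext c
  change lift (smulRightₗ ε ∘ₗ g) (CoalgebraStruct.comul c) = g c
  simp [h]

theorem FinGenContra.exists_fg_contraSpan_eq_top (hfg : FinGenContra k D π) :
    ∃ V₀ : Submodule k P, V₀.FG ∧ contraSpan π V₀ = ⊤ := by
  obtain ⟨V, _, _, _, Γ, hΓ, hΓπ⟩ := hfg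
  refine ⟨range (Γ ∘ₗ smulRightₗ ε), range_eq_map (Γ ∘ₗ smulRightₗ ε) ▸ Module.Finite.fg_top.map _,
    eq_top_iff.mpr fun x _ => ?_⟩
  obtain ⟨g, rfl⟩ := hΓ x
  rw [← freeContraaction_smulRight_comp g, hΓπ]
  exact mem_contraSpan.mpr ⟨_, range_comp_le_range g (Γ ∘ₗ smulRightₗ ε), rfl⟩

end FiniteGeneration

section Subcontramodule

variable {k D P : Type} [Field k] [AddCommGroup D] [Module k D] [AddCommGroup P] [Module k P]
  {π : (D →ₗ[k] P) →ₗ[k] P} {Q : Submodule k P} {π' : (D →ₗ[k] Q) →ₗ[k] Q}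

theorem IsSubcontra.comap_subtype {A : Submodule k P} (hA : IsSubcontra k D π A)
    (hc : CompatibleSubContraaction k D π Q π') : IsSubcontra k D π' (A.comap Q.subtype) := by
  intro g hg
  rw [Submodule.mem_comap, Submodule.subtype_apply, hc]
  exact hA _ (by rintro _ ⟨d, rfl⟩; exact hg ⟨d, rfl⟩)

variable [Coalgebra k D]

theorem IsContra.of_compatible (hP : IsContra k D π) (hc : CompatibleSubContraaction k D π Q π') :
    IsContra k D π' where
  contraassoc F := by
    have h : Q.subtype ∘ₗ π' ∘ₗ curry F = π ∘ₗ curry (Q.subtype ∘ₗ F) := by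
      ext a : 1
      rw [LinearMap.comp_apply, LinearMap.comp_apply, Submodule.subtype_apply, hc]
      congr 1
    apply Subtype.ext
    rw [hc, hc, ← LinearMap.comp_assoc, hP.contraassoc, h]
  contraunit p := by
    apply Subtype.ext
    rw [hc, ← hP.contraunit (p : P)]
    congr 1

theorem IsContra.contraSpan_comap_subtype_eq_top (hP : IsContra k D π) {X : Submodule k P}
    {π' : (D →ₗ[k] contraSpan π X) →ₗ[k] contraSpan π X}
    (hc : CompatibleSubContraaction k D π (contraSpan π X) π') :
    contraSpan π' (X.comap (contraSpan π X).subtype) = ⊤ := by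
  refine eq_top_iff.mpr fun ⟨x, hx⟩ _ => ?_
  obtain ⟨g, hg, rfl⟩ := mem_contraSpan.mp hx
  refine mem_contraSpan.mpr
    ⟨g.codRestrict _ fun d => hP.le_contraSpan X (hg ⟨d, rfl⟩), ?_, Subtype.ext ?_⟩
  · rintro _ ⟨d, rfl⟩
    exact hg ⟨d, rfl⟩
  · rw [hc, subtype_comp_codRestrict]

end Subcontramodule

theorem IsContra.exists_eq_top_of_contraSpan_iSup_eq_top {k D P : Type} [Field k]
    [AddCommGroup D] [Module k D] [Coalgebra k D] [AddCommGroup P] [Module k P]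
    {π : (D →ₗ[k] P) →ₗ[k] P} (hP : IsContra k D π) {E : Submodule k D} [FiniteDimensional k E]
    (hE : IsSubcoalgebra k D E) (hconil : ConilpotentQuotient k D E) (hfg : FinGenContra k D π)
    {f : ℕ → Submodule k P} (hf : ∀ n, IsSubcontra k D π (f n)) (hmono : Monotone f)
    (htop : contraSpan π (⨆ n, f n) = ⊤) : ∃ N, f N = ⊤ := by
  have hU : ∀ (φ : D →ₗ[k] k) x, x ∈ ⨆ n, f n → π (φ.smulRight x) ∈ ⨆ n, f n := by
    intro φ x hx
    obtain ⟨n, hn⟩ := (Submodule.mem_iSup_of_directed f hmono.directed_le).mp hx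
    refine Submodule.mem_iSup_of_mem n (hf n _ ?_)
    rintro _ ⟨d, rfl⟩
    exact (f n).smul_mem _ hn
  obtain ⟨V₀, hV₀, hV₀top⟩ := hfg.exists_fg_contraSpan_eq_top
  have hV₀le : V₀ ≤ ⨆ n, (f n ⊔ contraKill π E) := by
    rw [← iSup_sup]
    exact (htop ▸ le_top).trans (contraSpan_le_sup_contraKill hU)
  obtain ⟨s, hs⟩ := CompleteLattice.IsCompactElement.exists_finset_of_le_iSup
    _ ((Submodule.fg_iff_compact V₀).mp hV₀) _ hV₀le
  set N := s.sup id
  have hN : V₀ ≤ f N ⊔ contraKill π E :=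
    hs.trans (iSup₂_le fun n hn => sup_le_sup_right (hmono (Finset.le_sup (f := id) hn)) _)
  refine ⟨N, hP.eq_top_of_sup_contraKill_eq_top hE hconil (hf N) (eq_top_iff.mpr ?_)⟩
  rw [← hV₀top]
  intro x hx
  obtain ⟨g, hg, rfl⟩ := mem_contraSpan.mp hx
  exact sup_le_sup_left (contraKill_anti (hE.le_wedge ⊥ le_rfl)) (f N)
    (hP.apply_mem_sup_contraKill_wedge (hf N) bot_le (hg.trans hN))

/-- Lemma 1.6(b): if the maximal cosemisimple subcoalgebra `D^ss ⊆ D` is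
finite-dimensional, then any Noetherian left `D`-contramodule is co-Artinian. -/
theorem noetherian_contramodule_coArtinian
    (k : Type) [Field k]
    (D : Type) [AddCommGroup D] [Module k D] [Coalgebra k D]
    (Dss : Submodule k D) (hss : IsMaxCosemisimple k D Dss)
    (hfin : FiniteDimensional k ↥Dss)
    (P : Type) [AddCommGroup P] [Module k P]
    (π : (D →ₗ[k] P) →ₗ[k] P) (hP : IsContra k D π)
    (hno : NoetherianContra k D π) :
    CoArtinianContra k D π := by
  intro f hf hle
  have hmono : Monotone f := monotone_nat_of_le_succ hle
  set Q := contraSpan π (⨆ n, f n)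
  have hfQ : ∀ n, f n ≤ Q := fun n => (le_iSup f n).trans (hP.le_contraSpan _)
  obtain ⟨π', hc, hfg⟩ := hno Q (hP.isSubcontra_contraSpan _)
  obtain ⟨N, hN⟩ := (hP.of_compatible hc).exists_eq_top_of_contraSpan_iSup_eq_top hss.1 hss.2.1
    hfg (fun n => (hf n).comap_subtype hc) (fun m n h => Submodule.comap_mono (hmono h))
    (by rw [← Submodule.comap_subtype_iSup_of_le hfQ]; exact hP.contraSpan_comap_subtype_eq_top hc)
  refine ⟨N, fun m hm => le_antisymm ?_ (hmono hm)⟩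
  exact (hfQ m).trans (Submodule.comap_subtype_eq_top.mp hN)
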